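/- Let A ⊂ ℤ with |A| = N, 0 ∈ A, be spectral with spectrum Γ, 0 ∈ Γ, and suppose the Hadamard matrix (1/√N)(e^{2πiγa})_{γ∈Γ, a∈A} can be obtained from the standard N×N Hadamard matrix (1/√N)(e^{2πijk/N})_{j,k=0}^{N−1} by permutations of rows and columns. Then A = d·A_0 where d is an integer and A_0 is a complete set of residues modulo N with gcd(A_0) = 1; moreover Γ = (f/R)·L_0 where f and R are integers, L_0 is a complete set of residues modulo N with gcd(L_0) = 1, R = N·S where S divides d·f and d·f/S is mutually prime with N. Conversely, for any such data, Γ = (f/R)·L_0 is a spectrum for A = d·A_0. -/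

import Mathlib

open Complex Real

noncomputable section

/-- The enumerations `a : Fin N → ℤ` and `l : Fin N → ℝ` list a finite set `A ⊂ ℤ` together
with a spectrum `Γ ⊂ ℝ` for it. -/
def IsSpectrumPair (N : ℕ) (a : Fin N → ℤ) (l : Fin N → ℝ) : Prop :=
  Function.Injective a ∧ Function.Injective l ∧
  ∀ j k : Fin N,
    ∑ i : Fin N, Complex.exp (2 * Real.pi * Complex.I *
      (((a j : ℤ) : ℂ) - ((a k : ℤ) : ℂ)) * ((l i : ℝ) : ℂ)) =
    if j = k then (N : ℂ) else 0

/-- `v` enumerates a complete set of residues modulo `N`. -/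
def CompleteResiduesFun (N : ℕ) (v : Fin N → ℤ) : Prop :=
  ∀ z : ZMod N, ∃! i : Fin N, ((v i : ℤ) : ZMod N) = z

/-! With `e(x) = exp(2πix)`, the Hadamard hypothesis says that the numbers `N γ_j a_k` are
integers congruent to `σ(j) τ(k)` modulo `N`. As `d = gcd(a)` is an integer combination of the
`a_k`, also `t_j = N d γ_j` is an integer, and `t_j A₀_k ≡ σ(j) τ(k)` with `a = d A₀`. Fixing the
row with `σ(j) = 1` (or the column with `τ(k) = 1`) shows that `A₀` and `t = g L₀` are complete
residue systems, whence so is `L₀` and `g` is a unit modulo `N`.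

Conversely, with `m = df/S` the matrix is `e(m A₀_k L₀_j / N)`, and the orthogonality of the
characters of `ℤ/N` applied to its columns and to its rows (`m` is a unit) gives the spectrum
relations and the injectivity of both enumerations. -/

open Finset Function

lemma exp_two_pi_I_mul_eq_exp_iff {x y : ℝ} :
    exp (2 * π * I * x) = exp (2 * π * I * y) ↔ ∃ n : ℤ, x = y + n := by
  rw [exp_eq_exp_iff_exists_int]
  refine exists_congr fun n => ?_
  rw [show 2 * π * I * y + n * (2 * π * I) = 2 * π * I * ((y + n : ℝ) : ℂ) by push_cast; ring,
    mul_right_inj' two_pi_I_ne_zero, ofReal_inj]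

lemma isUnit_intCast_iff_gcd_eq_one {N : ℕ} {m : ℤ} : IsUnit (m : ZMod N) ↔ Int.gcd m N = 1 := by
  rw [ZMod.coe_int_isUnit_iff_isCoprime, isCoprime_comm, Int.isCoprime_iff_gcd_eq_one]

lemma completeResiduesFun_iff_bijective {N : ℕ} {v : Fin N → ℤ} :
    CompleteResiduesFun N v ↔ Bijective fun i => (v i : ZMod N) :=
  (bijective_iff_existsUnique _).symm

lemma completeResiduesFun_iff_injective {N : ℕ} [NeZero N] {v : Fin N → ℤ} :
    CompleteResiduesFun N v ↔ Injective fun i => (v i : ZMod N) := by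
  rw [completeResiduesFun_iff_bijective, Fintype.bijective_iff_injective_and_card, ZMod.card,
    Fintype.card_fin, and_iff_left rfl]

namespace CompleteResiduesFun

variable {N : ℕ} {v : Fin N → ℤ}

lemma injective_intCast (hv : CompleteResiduesFun N v) : Injective fun i => (v i : ZMod N) :=
  (completeResiduesFun_iff_bijective.1 hv).1

lemma of_mul_left [NeZero N] {c : ℤ} (hv : CompleteResiduesFun N fun i => c * v i) :
    CompleteResiduesFun N v :=
  completeResiduesFun_iff_injective.2 fun i j hij =>
    hv.injective_intCast (by simp only [Int.cast_mul, hij])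

lemma isUnit_of_mul_left {c : ℤ} (hv : CompleteResiduesFun N fun i => c * v i) :
    IsUnit (c : ZMod N) := by
  obtain ⟨i, hi, -⟩ := hv 1
  exact IsUnit.of_mul_eq_one (v i : ZMod N) (by simpa using hi)

end CompleteResiduesFun

lemma sum_exp_mul_completeResidues {N : ℕ} [NeZero N] {L : Fin N → ℤ}
    (hL : CompleteResiduesFun N L) (w : ℤ) :
    ∑ i, exp (2 * π * I * (w * L i) / N) = if (w : ZMod N) = 0 then (N : ℂ) else 0 := by
  have h := AddChar.sum_mulShift (w : ZMod N) (ZMod.isPrimitive_stdAddChar N)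
  rw [ZMod.card, Nat.cast_ite, Nat.cast_zero] at h
  rw [← h]
  refine Fintype.sum_bijective _ (completeResiduesFun_iff_bijective.1 hL) _ _ fun i => ?_
  rw [show (L i : ZMod N) * w = ((w * L i : ℤ) : ZMod N) by push_cast; ring,
    ZMod.stdAddChar_coe]
  push_cast
  ring_nf

lemma sum_exp_eq_ite_of_completeResidues {N : ℕ} [NeZero N] {A L : Fin N → ℤ}
    (hA : CompleteResiduesFun N A) (hL : CompleteResiduesFun N L) {m : ℤ}
    (hm : IsUnit (m : ZMod N)) (j k : Fin N) :
    ∑ i, exp (2 * π * I * (m * (A j - A k) * L i) / N) = if j = k then (N : ℂ) else 0 := by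
  have h := sum_exp_mul_completeResidues hL (m * (A j - A k))
  push_cast at h
  rw [h]
  simp only [hm.mul_right_eq_zero, sub_eq_zero, hA.injective_intCast.eq_iff]

lemma injective_of_sum_exp_eq_zero {ι κ : Type*} [Fintype κ] [Nonempty κ] {x : ι → ℂ}
    {y : κ → ℂ} (h : ∀ j k, j ≠ k → ∑ i, exp (2 * π * I * (x j - x k) * y i) = 0) :
    Injective x := by
  intro j k hjk
  by_contra hne
  simpa [hjk] using h j k hne

lemma intCast_mul_div_mul_eq {d f S : ℤ} (hS : S ∣ d * f) (N : ℝ) :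
    (d : ℝ) * (f / (N * S)) = ((d * f / S : ℤ) : ℝ) / N := by
  rcases eq_or_ne S 0 with rfl | hS0
  · simp
  rw [Int.cast_div hS (Int.cast_ne_zero.2 hS0)]
  push_cast
  ring

lemma isSpectrumPair_of_completeResidues {N : ℕ} [NeZero N] {d f S : ℤ} {A L : Fin N → ℤ}
    (hA : CompleteResiduesFun N A) (hL : CompleteResiduesFun N L) (hS : S ∣ d * f)
    (hm : IsUnit ((d * f / S : ℤ) : ZMod N)) :
    IsSpectrumPair N (fun k => d * A k) (fun j => (f * L j : ℝ) / ((N * S : ℤ) : ℝ)) := by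
  have hscale : (d : ℂ) * (f / (N * S)) = ((d * f / S : ℤ) : ℂ) / N := by
    exact_mod_cast intCast_mul_div_mul_eq hS N
  have horth : ∀ j k, ∑ i, Complex.exp (2 * π * I * (((d * A j : ℤ) : ℂ) - (d * A k : ℤ)) *
      ((f * L i / ((N * S : ℤ) : ℝ) : ℝ) : ℂ)) = if j = k then (N : ℂ) else 0 := by
    intro j k
    rw [← sum_exp_eq_ite_of_completeResidues hA hL hm]
    refine sum_congr rfl fun i _ => congrArg Complex.exp ?_
    push_cast
    linear_combination (2 * π * I * ((A j : ℂ) - A k) * L i) * hscale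
  have hdual : ∀ j k, ∑ i, Complex.exp (2 * π * I * (((f * L j / ((N * S : ℤ) : ℝ) : ℝ) : ℂ) -
      ((f * L k / ((N * S : ℤ) : ℝ) : ℝ) : ℂ)) * ((d * A i : ℤ) : ℂ)) =
        if j = k then (N : ℂ) else 0 := by
    intro j k
    rw [← sum_exp_eq_ite_of_completeResidues hL hA hm]
    refine sum_congr rfl fun i _ => congrArg Complex.exp ?_
    push_cast
    linear_combination (2 * π * I * ((L j : ℂ) - L k) * A i) * hscale
  refine ⟨?_, ?_, horth⟩
  · exact Injective.of_comp (f := ((↑) : ℤ → ℂ)) <| injective_of_sum_exp_eq_zero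
      (x := fun j => ((d * A j : ℤ) : ℂ)) fun j k hjk => (horth j k).trans (if_neg hjk)
  · exact Injective.of_comp (f := ((↑) : ℝ → ℂ)) <| injective_of_sum_exp_eq_zero
      (x := fun j => ((f * L j / ((N * S : ℤ) : ℝ) : ℝ) : ℂ))
      fun j k hjk => (hdual j k).trans (if_neg hjk)

def HasStandardForm (N : ℕ) (a : Fin N → ℤ) (γ : Fin N → ℝ) : Prop :=
  ∃ (d : ℤ) (A₀ : Fin N → ℤ), (∀ k, a k = d * A₀ k) ∧
    CompleteResiduesFun N A₀ ∧ Finset.univ.gcd A₀ = 1 ∧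
    ∃ (f R S : ℤ) (L₀ : Fin N → ℤ),
      (∀ j, γ j = ((f : ℝ) * (L₀ j : ℝ)) / (R : ℝ)) ∧
      CompleteResiduesFun N L₀ ∧ Finset.univ.gcd L₀ = 1 ∧
      R = (N : ℤ) * S ∧ S ∣ d * f ∧ Int.gcd (d * f / S) (N : ℤ) = 1

lemma hasStandardForm_fin_one {a : Fin 1 → ℤ} {γ : Fin 1 → ℝ} (ha : ∃ i, a i = 0)
    (hγ : ∃ i, γ i = 0) : HasStandardForm 1 a γ := by
  obtain ⟨i, hi⟩ := ha
  obtain ⟨j, hj⟩ := hγ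
  have hres : CompleteResiduesFun 1 fun _ => 1 := fun _ =>
    ⟨0, Subsingleton.elim _ _, fun _ _ => Subsingleton.elim _ _⟩
  refine ⟨0, fun _ => 1, fun k => ?_, hres, by simp, 0, 1, 1, fun _ => 1, fun k => ?_, hres,
    by simp, by simp, dvd_zero 1, by simp⟩
  · rw [Subsingleton.elim k i, hi, zero_mul]
  · rw [Subsingleton.elim k j, hj]
    simp

lemma exists_intCast_eq_of_exp_eq {N : ℕ} [NeZero N] {x : ℝ} {n : ℕ}
    (h : exp (2 * π * I * x) = exp (2 * π * I * n / N)) :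
    ∃ z : ℤ, N * x = z ∧ (z : ZMod N) = n := by
  rw [show 2 * π * I * n / N = 2 * π * I * ((n / N : ℝ) : ℂ) by push_cast; ring,
    exp_two_pi_I_mul_eq_exp_iff] at h
  obtain ⟨m, hm⟩ := h
  refine ⟨n + N * m, ?_, by simp⟩
  rw [hm, mul_add, mul_div_cancel₀ _ (Nat.cast_ne_zero.2 (NeZero.ne N))]
  push_cast
  ring

lemma natCast_fin_injective (N : ℕ) : Injective fun i : Fin N => ((i : ℕ) : ZMod N) := by
  intro i j hij
  have := congrArg ZMod.val hij
  simp only [ZMod.val_natCast_of_lt i.isLt, ZMod.val_natCast_of_lt j.isLt] at this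
  exact Fin.ext this

lemma completeResiduesFun_of_mul_eq_perm {N : ℕ} [NeZero N] (hN : 1 < N) {x y : Fin N → ℤ}
    {σ τ : Equiv.Perm (Fin N)} (h : ∀ j k, ((x j * y k : ℤ) : ZMod N) = (σ j : ℕ) * (τ k : ℕ)) :
    CompleteResiduesFun N y := by
  set j₁ := σ.symm ⟨1, hN⟩
  have hτ : ∀ k, ((x j₁ * y k : ℤ) : ZMod N) = (τ k : ℕ) := fun k => by simpa [j₁] using h j₁ k
  refine completeResiduesFun_iff_injective.2 fun k k' hkk' => τ.injective ?_
  apply natCast_fin_injective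
  simp only at hkk' ⊢
  rw [← hτ, ← hτ]
  push_cast
  rw [hkk']

lemma exists_intCast_eq_mul_gcd {ι : Type*} (s : Finset ι) (a : ι → ℤ) {r : ℝ}
    (h : ∀ k ∈ s, ∃ z : ℤ, r * a k = z) : ∃ t : ℤ, r * s.gcd a = t := by
  obtain ⟨c, hc⟩ := gcd_eq_sum_mul s a
  choose! z hz using h
  refine ⟨∑ k ∈ s, z k * c k, ?_⟩
  rw [hc]
  push_cast
  rw [mul_sum]
  exact sum_congr rfl fun k hk => by rw [← hz k hk]; ring

lemma hasStandardForm_of_mul_modEq_perm {N : ℕ} [NeZero N] (hN : 1 < N) {a : Fin N → ℤ}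
    {γ : Fin N → ℝ} (ha : Injective a) {σ τ : Equiv.Perm (Fin N)}
    (h : ∀ j k, ∃ z : ℤ, N * (γ j * a k) = z ∧ (z : ZMod N) = ((σ j : ℕ) * (τ k : ℕ) : ℕ)) :
    HasStandardForm N a γ := by
  have : Nontrivial (Fin N) := Fin.nontrivial_iff_two_le.2 hN
  choose z hz hzN using h
  obtain ⟨A₀, hA, hA₀⟩ := extract_gcd a univ_nonempty
  set d := univ.gcd a
  have hd : d ≠ 0 := by
    obtain ⟨k, hk⟩ := ha.exists_ne 0
    exact fun h0 => hk (gcd_eq_zero_iff.1 h0 k (mem_univ k))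
  choose t ht using fun j => exists_intCast_eq_mul_gcd univ a (r := N * γ j)
    fun k _ => ⟨z j k, by rw [mul_assoc, hz]⟩
  have hmod : ∀ j k, ((t j * A₀ k : ℤ) : ZMod N) = (σ j : ℕ) * (τ k : ℕ) := fun j k => by
    have hzt : (z j k : ℝ) = t j * A₀ k := by
      rw [← hz j k, ← ht j, hA k (mem_univ k)]
      push_cast
      ring
    rw [← show z j k = t j * A₀ k by exact_mod_cast hzt, hzN j k, Nat.cast_mul]
  obtain ⟨L₀, hL, hL₀⟩ := extract_gcd t univ_nonempty
  set g := univ.gcd t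
  have htL : (fun j => g * L₀ j) = t := funext fun j => (hL j (mem_univ j)).symm
  have hgL : CompleteResiduesFun N fun j => g * L₀ j := by
    rw [htL]
    exact completeResiduesFun_of_mul_eq_perm hN (σ := τ) (τ := σ) fun j k => by
      rw [mul_comm, hmod, mul_comm]
  refine ⟨d, A₀, fun k => hA k (mem_univ k), completeResiduesFun_of_mul_eq_perm hN hmod, hA₀,
    g, N * d, d, L₀, fun j => ?_, hgL.of_mul_left, hL₀, rfl, dvd_mul_right d g, ?_⟩
  · have hNd : ((N * d : ℤ) : ℝ) ≠ 0 := by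
      exact_mod_cast mul_ne_zero (Nat.cast_ne_zero.2 (NeZero.ne N)) hd
    have htj : (t j : ℝ) = g * L₀ j := by exact_mod_cast hL j (mem_univ j)
    rw [eq_div_iff hNd]
    push_cast
    linear_combination ht j + htj
  · rw [Int.mul_ediv_cancel_left g hd, ← isUnit_intCast_iff_gcd_eq_one]
    exact hgL.isUnit_of_mul_left

/-- if `A ∋ 0` is spectral with spectrum `Γ ∋ 0` and the associated Hadamard
matrix `(1/√N)(e^{2πiγa})` is obtained from the standard one `(1/√N)(e^{2πijk/N})` by
permuting rows and columns, then `A = d·A₀` with `A₀` a complete set of residues mod `N` and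
`gcd(A₀) = 1`, and `Γ = (f/R)·L₀` with `L₀` a complete set of residues mod `N`, `gcd(L₀) = 1`,
`R = N·S`, `S ∣ df` and `df/S` coprime to `N`. Conversely, any such data gives a spectrum
`(f/R)·L₀` for `A = d·A₀`. -/
theorem hadamard_standard_characterization :
    (∀ (N : ℕ), 0 < N → ∀ (a : Fin N → ℤ) (γ : Fin N → ℝ),
      IsSpectrumPair N a γ →
      (∃ i, a i = 0) → (∃ i, γ i = 0) →
      (∃ σ τ : Equiv.Perm (Fin N), ∀ j k : Fin N,
        ((1 : ℂ) / Real.sqrt N) * Complex.exp (2 * Real.pi * Complex.I *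
            ((γ j : ℝ) : ℂ) * ((a k : ℤ) : ℂ)) =
        ((1 : ℂ) / Real.sqrt N) * Complex.exp (2 * Real.pi * Complex.I *
            ((((σ j : Fin N) : ℕ) * ((τ k : Fin N) : ℕ) : ℕ) : ℂ) / (N : ℂ))) →
      ∃ (d : ℤ) (A₀ : Fin N → ℤ), (∀ k, a k = d * A₀ k) ∧
        CompleteResiduesFun N A₀ ∧ Finset.univ.gcd A₀ = 1 ∧
        ∃ (f R S : ℤ) (L₀ : Fin N → ℤ),
          (∀ j, γ j = ((f : ℝ) * (L₀ j : ℝ)) / (R : ℝ)) ∧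
          CompleteResiduesFun N L₀ ∧ Finset.univ.gcd L₀ = 1 ∧
          R = (N : ℤ) * S ∧ S ∣ d * f ∧ Int.gcd (d * f / S) (N : ℤ) = 1) ∧
    (∀ (N : ℕ), 0 < N → ∀ (d f S : ℤ) (A₀ L₀ : Fin N → ℤ),
      CompleteResiduesFun N A₀ → Finset.univ.gcd A₀ = 1 →
      CompleteResiduesFun N L₀ → Finset.univ.gcd L₀ = 1 →
      S ∣ d * f → Int.gcd (d * f / S) (N : ℤ) = 1 →
      IsSpectrumPair N (fun k => d * A₀ k)
        (fun j => ((f : ℝ) * (L₀ j : ℝ)) / (((N : ℤ) * S : ℤ) : ℝ))) := by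
  refine ⟨fun N hN a γ hsp ha hγ ⟨σ, τ, hH⟩ => ?_,
    fun N hN d f S A₀ L₀ hA _ hL _ hS hm => ?_⟩
  · obtain rfl | hN₂ := (Nat.succ_le_of_lt hN).eq_or_lt
    · exact hasStandardForm_fin_one ha hγ
    have : NeZero N := ⟨hN.ne'⟩
    have hscale : (1 : ℂ) / Real.sqrt N ≠ 0 := by
      simp [NeZero.ne N]
    refine hasStandardForm_of_mul_modEq_perm hN₂ hsp.1 (σ := σ) (τ := τ)
      fun j k => exists_intCast_eq_of_exp_eq ?_
    simpa only [mul_assoc, ofReal_mul, ofReal_intCast] using mul_left_cancel₀ hscale (hH j k)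
  · have : NeZero N := ⟨hN.ne'⟩
    exact isSpectrumPair_of_completeResidues hA hL hS (isUnit_intCast_iff_gcd_eq_one.2 hm)
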